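/- arXiv:0802.3375 — 4 statements merged into one kernel-verified Lean document; each statement's English description precedes it below -/
import Mathlib

section
/- Let I ⊆ R = K[x_1,…,x_n] be the monomial ideal generated by x^{v_1},…,x^{v_q} and let A be the n×q matrix with columns v_1,…,v_q. Then I is normal if and only if the blocking polyhedron B(Q) of Q(A) has the integer decomposition property and every minimal integer vector of B(Q) (minimal with respect to the componentwise order ≤) is a column of A. -/
/-!
Everything reduces to exponent vectors. `x^a ∈ I^k` iff `a` dominates a sum of `k` columns of `A`,
and `x^a` is integral over `I^k` iff `p • a` dominates a sum of `p * k` columns for some `p > 0`.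
By Farkas' lemma the latter holds iff `a ∈ k • B(Q)`: a rational point of `B(Q)` dominates a convex
combination of the columns, since otherwise a Farkas certificate is a point of `Q(A)` separating it.
Farkas' lemma is proved over `ℚ` by Fourier–Motzkin elimination, so that the convex combination is
rational and its denominators can be cleared. Hence `I` is normal iff every integer point of
`k • B(Q)` dominates a sum of `k` columns. This gives the integer decomposition property (enlarge
one summand to absorb the excess) and, for `k = 1`, that minimal integer points are columns.
Conversely, write an integer point of `k • B(Q)` as a sum of `k` integer points of `B(Q)`; each of
them dominates a minimal one, which is a column.
-/

open BigOperators Pointwise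

/-- The monomial `x^a = x_1^{a_1} ⋯ x_n^{a_n}` in `K[x_1,…,x_n]`. -/
noncomputable def mono (K : Type*) [Field K] {n : ℕ} (a : Fin n → ℕ) :
    MvPolynomial (Fin n) K :=
  MvPolynomial.monomial (Finsupp.equivFunOnFinite.symm a) (1 : K)

/-- The polyhedron `Q(A) = {x ∈ ℝⁿ : x ≥ 0, xA ≥ 1}`, where `A` is the
`n × q` matrix with columns `v 0, …, v (q-1)`. -/
def QA {n q : ℕ} (v : Fin q → Fin n → ℕ) : Set (Fin n → ℝ) :=
  {x | (∀ i, 0 ≤ x i) ∧ ∀ j, 1 ≤ ∑ i, x i * (v j i : ℝ)}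

/-- The blocking polyhedron `B(Q) = {z ∈ ℝⁿ : z ≥ 0, ⟨z,x⟩ ≥ 1 ∀ x ∈ Q(A)}`. -/
def BQ {n q : ℕ} (v : Fin q → Fin n → ℕ) : Set (Fin n → ℝ) :=
  {z | (∀ i, 0 ≤ z i) ∧ ∀ x ∈ QA v, 1 ≤ ∑ i, z i * x i}

/-- A set `S ⊆ ℝⁿ` has the integer decomposition property if for each `k ∈ ℕ`,
every integer vector in `k • S` is a sum of `k` integer vectors in `S`. -/
def HasIDP {n : ℕ} (S : Set (Fin n → ℝ)) : Prop :=
  ∀ (k : ℕ) (a : Fin n → ℤ), (fun i => (a i : ℝ)) ∈ (k : ℝ) • S →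
    ∃ f : Fin k → Fin n → ℤ,
      (∀ j, (fun i => (f j i : ℝ)) ∈ S) ∧ a = ∑ j, f j

open Matrix

lemma exists_le_le_of_forall_le {α β γ : Type*} [LinearOrder α] [Nonempty α] [Finite β]
    [Finite γ] (L : β → α) (U : γ → α) (h : ∀ j k, L j ≤ U k) :
    ∃ τ, (∀ j, L j ≤ τ) ∧ ∀ k, τ ≤ U k := by
  cases isEmpty_or_nonempty γ with
  | inl _ =>
    obtain ⟨τ, hτ⟩ := Finite.exists_le L
    exact ⟨τ, hτ, isEmptyElim⟩
  | inr _ =>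
    obtain ⟨k₀, hk₀⟩ := Finite.exists_min U
    exact ⟨U k₀, fun j => h j k₀, hk₀⟩

lemma Matrix.mulVec_snoc {R ι : Type*} [NonUnitalNonAssocSemiring R] {m : ℕ}
    (c : Matrix ι (Fin (m + 1)) R) (x : Fin m → R) (τ : R) (i : ι) :
    (c *ᵥ Fin.snoc x τ) i = (c.submatrix id Fin.castSucc *ᵥ x) i + c i (Fin.last m) * τ := by
  simp [mulVec, dotProduct, Fin.sum_univ_castSucc]

namespace FourierMotzkin

variable {𝕜 ι : Type*} [Field 𝕜] [LinearOrder 𝕜] {m : ℕ}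

/-- The rows of the system obtained by eliminating the last variable: the rows of `c` not involving
it, and one combination for each pair of rows where it has opposite signs. -/
abbrev Row (c : Matrix ι (Fin (m + 1)) 𝕜) : Type _ :=
  {i // c i (Fin.last m) = 0} ⊕ ({i // 0 < c i (Fin.last m)} × {i // c i (Fin.last m) < 0})

open Classical in
noncomputable def weight (c : Matrix ι (Fin (m + 1)) 𝕜) : Matrix (Row c) ι 𝕜
  | .inl i => Pi.single i.1 1
  | .inr (p, r) => Pi.single p.1 (c p (Fin.last m))⁻¹ + Pi.single r.1 (-(c r (Fin.last m))⁻¹)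

lemma weight_nonneg [IsStrictOrderedRing 𝕜] (c : Matrix ι (Fin (m + 1)) 𝕜) (r : Row c) :
    0 ≤ weight c r := by
  classical
  rcases r with i | ⟨p, r⟩
  · exact Pi.single_nonneg.2 zero_le_one
  · exact add_nonneg (Pi.single_nonneg.2 (inv_nonneg.2 p.2.le))
      (Pi.single_nonneg.2 (neg_nonneg.2 (inv_nonpos.2 r.2.le)))

variable [Fintype ι]

noncomputable def reduced (c : Matrix ι (Fin (m + 1)) 𝕜) : Matrix (Row c) (Fin m) 𝕜 :=
  weight c * c.submatrix id Fin.castSucc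

lemma weight_inr_dotProduct (c : Matrix ι (Fin (m + 1)) 𝕜) (p r) (f : ι → 𝕜) :
    weight c (.inr (p, r)) ⬝ᵥ f = (c p (Fin.last m))⁻¹ * f p - (c r (Fin.last m))⁻¹ * f r := by
  classical
  simp [weight, add_dotProduct, single_dotProduct, sub_eq_add_neg]

lemma weight_mulVec_last (c : Matrix ι (Fin (m + 1)) 𝕜) :
    weight c *ᵥ (fun i => c i (Fin.last m)) = 0 := by
  classical
  funext r
  rcases r with i | ⟨p, r⟩
  · simpa [weight, mulVec, single_dotProduct] using i.2
  · rw [Pi.zero_apply, mulVec, weight_inr_dotProduct, inv_mul_cancel₀ p.2.ne',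
      inv_mul_cancel₀ r.2.ne, sub_self]

lemma vecMul_weight_vecMul_eq_zero (c : Matrix ι (Fin (m + 1)) 𝕜) (y : Row c → 𝕜)
    (hy : y ᵥ* reduced c = 0) : y ᵥ* weight c ᵥ* c = 0 := by
  funext t
  induction t using Fin.lastCases with
  | last =>
    change (y ᵥ* weight c) ⬝ᵥ (fun i => c i (Fin.last m)) = 0
    rw [← dotProduct_mulVec, weight_mulVec_last, dotProduct_zero]
  | cast t =>
    rw [reduced, ← vecMul_vecMul] at hy
    exact congrFun hy t

variable [IsStrictOrderedRing 𝕜]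

lemma exists_snoc_mulVec_le (c : Matrix ι (Fin (m + 1)) 𝕜) (b : ι → 𝕜) (x : Fin m → 𝕜)
    (hx : reduced c *ᵥ x ≤ weight c *ᵥ b) : ∃ τ, c *ᵥ Fin.snoc x τ ≤ b := by
  set s := c.submatrix id Fin.castSucc *ᵥ x
  -- The combined rows say that each lower bound on the last variable, coming from a row where its
  -- coefficient is negative, is below each upper bound, coming from a row where it is positive.
  have hrow (r : Row c) : weight c r ⬝ᵥ s ≤ weight c r ⬝ᵥ b := by
    have := hx r
    rwa [reduced, ← mulVec_mulVec] at this
  obtain ⟨τ, hlower, hupper⟩ := exists_le_le_of_forall_le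
    (fun r : {i // c i (Fin.last m) < 0} => (b r - s r) / c r (Fin.last m))
    (fun p : {i // 0 < c i (Fin.last m)} => (b p - s p) / c p (Fin.last m))
    (fun r p => by
      have := hrow (.inr (p, r))
      simp only [weight_inr_dotProduct] at this
      simp only [div_eq_inv_mul, mul_sub]
      linarith)
  refine ⟨τ, fun i => ?_⟩
  rw [mulVec_snoc]
  rcases lt_trichotomy (c i (Fin.last m)) 0 with hneg | hzero | hpos
  · have := hlower ⟨i, hneg⟩
    rw [div_le_iff_of_neg hneg] at this
    linarith
  · classical
    simpa [hzero, weight, single_dotProduct] using hrow (.inl ⟨i, hzero⟩)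
  · have := hupper ⟨i, hpos⟩
    rw [le_div_iff₀ hpos] at this
    linarith

end FourierMotzkin

open FourierMotzkin in
theorem farkas_alternative {𝕜 ι : Type*} [Field 𝕜] [LinearOrder 𝕜] [IsStrictOrderedRing 𝕜]
    [Fintype ι] {m : ℕ} (c : Matrix ι (Fin m) 𝕜) (b : ι → 𝕜) :
    (∃ x, c *ᵥ x ≤ b) ∨ ∃ y, 0 ≤ y ∧ y ᵥ* c = 0 ∧ y ⬝ᵥ b < 0 := by
  induction m generalizing ι with
  | zero =>
    by_cases hb : 0 ≤ b
    · exact .inl ⟨0, by simpa using hb⟩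
    · classical
      obtain ⟨i, hi⟩ : ∃ i, b i < 0 := by simpa [Pi.le_def] using hb
      refine .inr ⟨Pi.single i 1, Pi.single_nonneg.2 zero_le_one, Subsingleton.elim _ _, ?_⟩
      simpa [single_dotProduct] using hi
  | succ m ih =>
    rcases ih (reduced c) (weight c *ᵥ b) with ⟨x, hx⟩ | ⟨y, hy0, hyc, hyb⟩
    · obtain ⟨τ, hτ⟩ := exists_snoc_mulVec_le c b x hx
      exact .inl ⟨_, hτ⟩
    · refine .inr ⟨y ᵥ* weight c, fun i => ?_, vecMul_weight_vecMul_eq_zero c y hyc, ?_⟩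
      · exact Finset.sum_nonneg fun r _ => mul_nonneg (hy0 r) (weight_nonneg c r i)
      · rwa [← dotProduct_mulVec]

theorem farkas_alternative_nonneg {𝕜 ι : Type*} [Field 𝕜] [LinearOrder 𝕜] [IsStrictOrderedRing 𝕜]
    [Fintype ι] {m : ℕ} (c : Matrix ι (Fin m) 𝕜) (b : ι → 𝕜) :
    (∃ x, 0 ≤ x ∧ c *ᵥ x ≤ b) ∨ ∃ y, 0 ≤ y ∧ 0 ≤ y ᵥ* c ∧ y ⬝ᵥ b < 0 := by
  rcases farkas_alternative (fromRows (-1 : Matrix (Fin m) (Fin m) 𝕜) c) (Sum.elim 0 b) with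
    ⟨x, hx⟩ | ⟨y, hy0, hyc, hyb⟩
  · rw [fromRows_mulVec, Sum.elim_le_elim_iff, neg_mulVec, one_mulVec, neg_nonpos] at hx
    exact .inl ⟨x, hx⟩
  · rw [vecMul_fromRows, vecMul_neg, vecMul_one, neg_add_eq_zero] at hyc
    refine .inr ⟨y ∘ Sum.inr, fun i => hy0 _, hyc ▸ fun t => hy0 _, ?_⟩
    rwa [← Sum.elim_comp_inl_inr y, sumElim_dotProduct_sumElim, dotProduct_zero, zero_add] at hyb

lemma exists_fin_sum_comp_eq {ι M : Type*} [Fintype ι] [AddCommMonoid M] (m : ι → ℕ) {N : ℕ}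
    (hN : ∑ i, m i = N) (F : ι → M) : ∃ g : Fin N → ι, ∑ t, F (g t) = ∑ i, m i • F i := by
  let e : (Σ i, Fin (m i)) ≃ Fin N := Fintype.equivFinOfCardEq (by simp [hN])
  refine ⟨fun t => (e.symm t).1, ?_⟩
  rw [e.symm.sum_comp (fun σ => F σ.1), Fintype.sum_sigma]
  simp

lemma exists_nat_eq_mul_of_nonneg {ι : Type*} [Fintype ι] (w : ι → ℚ) (hw : 0 ≤ w) :
    ∃ p : ℕ, 0 < p ∧ ∃ m : ι → ℕ, ∀ j, (m j : ℚ) = p * w j := by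
  refine ⟨∏ j, (w j).den, Finset.prod_pos fun j _ => (w j).den_pos,
    fun j => (w j).num.toNat * ((∏ j, (w j).den) / (w j).den), fun j => ?_⟩
  have hdvd : (w j).den ∣ ∏ j, (w j).den := Finset.dvd_prod_of_mem _ (Finset.mem_univ j)
  have hnum : ((w j).num.toNat : ℚ) = (w j).num := by
    exact_mod_cast Int.toNat_of_nonneg (Rat.num_nonneg.2 (hw j))
  rw [Nat.cast_mul, Nat.cast_div hdvd (by simp), hnum]
  conv_rhs => rw [← Rat.num_div_den (w j)]
  ring

lemma exists_le_sum_eq_of_sum_le {ι M : Type*} [Fintype ι] [DecidableEq ι] [AddCommMonoid M]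
    [PartialOrder M] [CanonicallyOrderedAdd M] (i₀ : ι) {x : ι → M} {a : M}
    (h : ∑ i, x i ≤ a) : ∃ y, x ≤ y ∧ ∑ i, y i = a := by
  obtain ⟨d, rfl⟩ := exists_add_of_le h
  exact ⟨x + Pi.single i₀ d, le_self_add, by simp [Finset.sum_add_distrib]⟩

section Monomials

variable (K : Type*) [Field K] {n : ℕ}

lemma mono_sum {ι : Type*} (s : Finset ι) (f : ι → Fin n → ℕ) :
    mono K (∑ t ∈ s, f t) = ∏ t ∈ s, mono K (f t) := by
  have : Finsupp.equivFunOnFinite.symm (∑ t ∈ s, f t) =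
      ∑ t ∈ s, Finsupp.equivFunOnFinite.symm (f t) := by
    ext i
    simp [Finset.sum_apply]
  rw [mono, this, MvPolynomial.monomial_sum_one]
  rfl

lemma mono_nsmul (p : ℕ) (a : Fin n → ℕ) : mono K (p • a) = mono K a ^ p := by
  simpa using mono_sum K (Finset.range p) fun _ => a

lemma mono_mem_span_image_iff (S : Set (Fin n → ℕ)) (a : Fin n → ℕ) :
    mono K a ∈ Ideal.span (mono K '' S) ↔ ∃ s ∈ S, s ≤ a := by
  classical
  have : mono K '' S = (fun s => MvPolynomial.monomial s (1 : K)) ''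
      (Finsupp.equivFunOnFinite.symm '' S) := by
    rw [Set.image_image]; rfl
  rw [this, MvPolynomial.mem_ideal_span_monomial_image, mono,
    MvPolynomial.support_monomial, if_neg one_ne_zero]
  simp only [Finset.mem_singleton, forall_eq, Set.mem_image, exists_exists_and_eq_and,
    ← Finsupp.coe_le_coe, Finsupp.coe_equivFunOnFinite_symm]

lemma span_image_mono_le_iff (S T : Set (Fin n → ℕ)) :
    Ideal.span (mono K '' S) ≤ Ideal.span (mono K '' T) ↔ ∀ s ∈ S, ∃ t ∈ T, t ≤ s := by
  simp [Ideal.span_le, Set.subset_def, mono_mem_span_image_iff]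

end Monomials

section MonomialIdeal

variable {n q : ℕ}

def DominatesColumnSum (v : Fin q → Fin n → ℕ) (k : ℕ) (a : Fin n → ℕ) : Prop :=
  ∃ g : Fin k → Fin q, ∑ t, v (g t) ≤ a

variable (K : Type*) [Field K] (v : Fin q → Fin n → ℕ)

lemma span_mono_pow (k : ℕ) :
    Ideal.span {f | ∃ j, f = mono K (v j)} ^ k =
      Ideal.span (mono K '' Set.range fun g : Fin k → Fin q => ∑ t, v (g t)) := by
  rw [Ideal.span, Submodule.span_pow]
  congr 1
  ext f
  simp only [Set.mem_pow, List.prod_ofFn, Set.mem_image, Set.exists_range_iff, mono_sum]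
  constructor
  · rintro ⟨h, rfl⟩
    choose g hg using fun t => (h t).2
    exact ⟨g, by simp [hg]⟩
  · rintro ⟨g, rfl⟩
    exact ⟨fun t => ⟨_, g t, rfl⟩, rfl⟩

lemma mono_mem_span_mono_pow_iff (k : ℕ) (a : Fin n → ℕ) :
    mono K a ∈ Ideal.span {f | ∃ j, f = mono K (v j)} ^ k ↔ DominatesColumnSum v k a := by
  simp [span_mono_pow, mono_mem_span_image_iff, DominatesColumnSum]

lemma normal_iff_dominatesColumnSum_of_mul (I : Ideal (MvPolynomial (Fin n) K))
    (hI : I = Ideal.span {f | ∃ j, f = mono K (v j)}) :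
    (∀ i : ℕ, 1 ≤ i →
        I ^ i = Ideal.span {f | ∃ a : Fin n → ℕ, f = mono K a ∧
          ∃ p : ℕ, 0 < p ∧ mono K a ^ p ∈ I ^ (p * i)}) ↔
      ∀ k, 1 ≤ k → ∀ a, (∃ p, 0 < p ∧ DominatesColumnSum v (p * k) (p • a)) →
        DominatesColumnSum v k a := by
  subst hI
  refine forall₂_congr fun k _ => ?_
  have hclosure : {f | ∃ a : Fin n → ℕ, f = mono K a ∧ ∃ p : ℕ, 0 < p ∧
      mono K a ^ p ∈ Ideal.span {f | ∃ j, f = mono K (v j)} ^ (p * k)} =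
      mono K '' {a | ∃ p, 0 < p ∧ DominatesColumnSum v (p * k) (p • a)} := by
    ext f
    simp only [Set.mem_ofPred_eq, Set.mem_image, ← mono_nsmul, mono_mem_span_mono_pow_iff]
    exact exists_congr fun a => by rw [eq_comm, and_comm]
  have hgenerators : ∀ s ∈ Set.range fun g : Fin k → Fin q => ∑ t, v (g t),
      ∃ a ∈ {a | ∃ p, 0 < p ∧ DominatesColumnSum v (p * k) (p • a)}, a ≤ s := by
    rintro _ ⟨g, rfl⟩
    exact ⟨_, ⟨1, one_pos, by rw [one_mul, one_smul]; exact ⟨g, le_rfl⟩⟩, le_rfl⟩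
  rw [hclosure, span_mono_pow, le_antisymm_iff, span_image_mono_le_iff, span_image_mono_le_iff,
    and_iff_right hgenerators]
  simp only [Set.mem_ofPred_eq, Set.exists_range_iff]
  rfl

end MonomialIdeal

section Polyhedra

variable {n q : ℕ} (v : Fin q → Fin n → ℕ)

lemma column_mem_BQ (j : Fin q) : (fun i => (v j i : ℝ)) ∈ BQ v :=
  ⟨fun i => Nat.cast_nonneg _, fun x hx => by simpa only [mul_comm] using hx.2 j⟩

lemma mem_BQ_of_le {z z' : Fin n → ℝ} (hz : z ∈ BQ v) (h : z ≤ z') : z' ∈ BQ v :=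
  ⟨fun i => (hz.1 i).trans (h i), fun x hx => (hz.2 x hx).trans <|
    Finset.sum_le_sum fun i _ => mul_le_mul_of_nonneg_right (h i) (hx.1 i)⟩

lemma mem_smul_BQ_iff {c : ℝ} (hc : 0 < c) (z : Fin n → ℝ) :
    z ∈ c • BQ v ↔ (∀ i, 0 ≤ z i) ∧ ∀ x ∈ QA v, c ≤ ∑ i, z i * x i := by
  rw [Set.mem_smul_set_iff_inv_smul_mem₀ hc.ne']
  refine and_congr (forall_congr' fun i => ?_) (forall₂_congr fun x _ => ?_)
  · simp [hc]
  · simp only [Pi.smul_apply, smul_eq_mul, mul_assoc, ← Finset.mul_sum]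
    rw [le_inv_mul_iff₀ hc, mul_one]

lemma exists_convexComb_le_of_one_le_sum {w : Fin q → ℚ} {z : Fin n → ℚ} (hz : 0 ≤ z)
    (hw0 : 0 ≤ w) (hsum : 1 ≤ ∑ j, w j) (hle : ∀ i, ∑ j, v j i * w j ≤ z i) :
    ∃ w : Fin q → ℚ, 0 ≤ w ∧ ∑ j, w j = 1 ∧ ∀ i, ∑ j, w j * v j i ≤ z i := by
  have hpos : 0 < ∑ j, w j := one_pos.trans_le hsum
  refine ⟨(∑ j, w j)⁻¹ • w, smul_nonneg (inv_nonneg.2 hpos.le) hw0, ?_, fun i => ?_⟩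
  · simp [← Finset.mul_sum, hpos.ne']
  · calc ∑ j, ((∑ j, w j)⁻¹ • w) j * v j i = (∑ j, w j)⁻¹ * ∑ j, v j i * w j := by
          simp only [Pi.smul_apply, smul_eq_mul, Finset.mul_sum]
          exact Finset.sum_congr rfl fun j _ => by ring
      _ ≤ z i := by
          rw [inv_mul_le_iff₀ hpos]
          exact (hle i).trans (le_mul_of_one_le_left (hz i) hsum)

lemma exists_mem_QA_sum_mul_lt_one {z : Fin n → ℚ} {β : ℚ} {u : Fin n → ℚ} (hz : 0 ≤ z)
    (hu : 0 ≤ u) (hcol : ∀ j, β ≤ ∑ i, u i * v j i) (hlt : ∑ i, u i * z i < β) :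
    ∃ x ∈ QA v, ∑ i, (z i : ℝ) * x i < 1 := by
  have hβ : 0 < β := (Finset.sum_nonneg fun i _ => mul_nonneg (hu i) (hz i)).trans_lt hlt
  refine ⟨fun i => ((u i / β : ℚ) : ℝ),
    ⟨fun i => Rat.cast_nonneg.2 (div_nonneg (hu i) hβ.le), fun j => ?_⟩, ?_⟩
  · have : (1 : ℚ) ≤ ∑ i, u i / β * v j i := by
      simp_rw [div_mul_eq_mul_div, ← Finset.sum_div]
      exact (one_le_div hβ).2 (hcol j)
    beta_reduce
    exact_mod_cast this
  · have : ∑ i, z i * (u i / β) < 1 := by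
      simp_rw [mul_div_assoc', ← Finset.sum_div, mul_comm (z _)]
      exact (div_lt_one hβ).2 hlt
    beta_reduce
    exact_mod_cast this

lemma exists_convexComb_le (z : Fin n → ℚ) (hz : 0 ≤ z)
    (h : ∀ x ∈ QA v, 1 ≤ ∑ i, (z i : ℝ) * x i) :
    ∃ w : Fin q → ℚ, 0 ≤ w ∧ ∑ j, w j = 1 ∧ ∀ i, ∑ j, w j * v j i ≤ z i := by
  -- Farkas' alternative for the system `w ≥ 0`, `∑ j, w j ≥ 1`, `A w ≤ z`.
  rcases farkas_alternative_nonneg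
      (fromRows (of fun (_ : Unit) _ => -1) (of fun i j => (v j i : ℚ)))
      (Sum.elim (fun _ => -1) z) with ⟨w, hw0, hw⟩ | ⟨y, hy0, hyc, hyb⟩
  · rw [fromRows_mulVec, Sum.elim_le_elim_iff] at hw
    simp only [Pi.le_def, mulVec, dotProduct, of_apply, neg_mul, one_mul,
      Finset.sum_neg_distrib, neg_le_neg_iff, forall_const] at hw
    exact exists_convexComb_le_of_one_le_sum v hz hw0 hw.1 hw.2
  · obtain ⟨β, u, rfl⟩ : ∃ β u, y = Sum.elim (fun _ => β) u :=
      ⟨y (.inl ()), y ∘ .inr, by ext (_ | _) <;> rfl⟩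
    simp only [vecMul_fromRows, Pi.le_def, Pi.add_apply, Pi.zero_apply, vecMul,
      dotProduct, of_apply, Fintype.sum_sum_type, Finset.univ_unique,
      Finset.sum_singleton, Function.comp_apply, Sum.elim_inl, Sum.elim_inr,
      mul_neg, mul_one] at hyc hyb
    obtain ⟨x, hx, hlt⟩ := exists_mem_QA_sum_mul_lt_one v (β := β) (u := u) hz
      (fun i => hy0 (.inr i)) (fun j => by linarith [hyc j]) (by linarith)
    exact absurd (h x hx) hlt.not_ge

end Polyhedra

section IntegralClosure

variable {n q : ℕ} (v : Fin q → Fin n → ℕ)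

lemma le_sum_mul_of_dominatesColumnSum {p k : ℕ} (hp : 0 < p) {a : Fin n → ℕ}
    (h : DominatesColumnSum v (p * k) (p • a)) : ∀ x ∈ QA v, (k : ℝ) ≤ ∑ i, (a i : ℝ) * x i := by
  rintro x ⟨hx0, hx1⟩
  obtain ⟨g, hg⟩ := h
  have hg' (i : Fin n) : ∑ t, (v (g t) i : ℝ) ≤ p * a i := by
    have := hg i
    simp only [Finset.sum_apply, Pi.smul_apply, smul_eq_mul] at this
    exact_mod_cast this
  refine le_of_mul_le_mul_left ?_ (Nat.cast_pos.2 hp : (0 : ℝ) < p)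
  calc (p : ℝ) * k = ∑ _t : Fin (p * k), (1 : ℝ) := by simp
    _ ≤ ∑ t, ∑ i, x i * v (g t) i := Finset.sum_le_sum fun t _ => hx1 (g t)
    _ = ∑ i, x i * ∑ t, (v (g t) i : ℝ) := by
        rw [Finset.sum_comm]; simp only [Finset.mul_sum]
    _ ≤ ∑ i, x i * (p * a i) :=
        Finset.sum_le_sum fun i _ => mul_le_mul_of_nonneg_left (hg' i) (hx0 i)
    _ = p * ∑ i, (a i : ℝ) * x i := by
        rw [Finset.mul_sum]; exact Finset.sum_congr rfl fun i _ => by ring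

lemma exists_dominatesColumnSum_mul {k : ℕ} (hk : 0 < k) (a : Fin n → ℕ)
    (h : ∀ x ∈ QA v, (k : ℝ) ≤ ∑ i, (a i : ℝ) * x i) :
    ∃ p, 0 < p ∧ DominatesColumnSum v (p * k) (p • a) := by
  obtain ⟨w, hw0, hw1, hwa⟩ := exists_convexComb_le v (fun i => (a i : ℚ) / k)
    (fun i => by positivity) fun x hx => by
      push_cast
      simp_rw [div_mul_eq_mul_div, ← Finset.sum_div]
      exact (one_le_div (Nat.cast_pos.2 hk)).2 (h x hx)
  obtain ⟨p, hp, m, hm⟩ := exists_nat_eq_mul_of_nonneg w hw0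
  have hm_sum : ∑ j, k * m j = p * k := by
    have : ∑ j, (m j : ℚ) = p := by simp [hm, ← Finset.mul_sum, hw1]
    rw [← Finset.mul_sum, mul_comm, (by exact_mod_cast this : ∑ j, m j = p)]
  obtain ⟨g, hg⟩ := exists_fin_sum_comp_eq (fun j => k * m j) hm_sum v
  refine ⟨p, hp, g, hg ▸ fun i => ?_⟩
  have : ∑ j, ((k * m j : ℕ) : ℚ) * v j i ≤ p * a i := by
    calc ∑ j, ((k * m j : ℕ) : ℚ) * v j i = k * p * ∑ j, w j * v j i := by
          simp only [Nat.cast_mul, hm, Finset.mul_sum]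
          exact Finset.sum_congr rfl fun j _ => by ring
      _ ≤ k * p * (a i / k) := by gcongr; exact hwa i
      _ = p * a i := by field_simp
  simpa [Finset.sum_apply] using (by exact_mod_cast this : ∑ j, k * m j * v j i ≤ p * a i)

lemma exists_dominatesColumnSum_mul_iff {k : ℕ} (hk : 0 < k) (a : Fin n → ℕ) :
    (∃ p, 0 < p ∧ DominatesColumnSum v (p * k) (p • a)) ↔
      (fun i => (a i : ℝ)) ∈ (k : ℝ) • BQ v := by
  rw [mem_smul_BQ_iff v (Nat.cast_pos.2 hk)]
  exact ⟨fun ⟨p, hp, h⟩ => ⟨fun i => Nat.cast_nonneg _, le_sum_mul_of_dominatesColumnSum v hp h⟩,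
    fun h => exists_dominatesColumnSum_mul v hk a h.2⟩

end IntegralClosure

section Normality

variable {n q : ℕ} (v : Fin q → Fin n → ℕ)

lemma normal_iff_dominatesColumnSum_of_mem_smul_BQ (K : Type*) [Field K]
    (I : Ideal (MvPolynomial (Fin n) K))
    (hI : I = Ideal.span {f | ∃ j, f = mono K (v j)}) :
    (∀ i : ℕ, 1 ≤ i →
        I ^ i = Ideal.span {f | ∃ a : Fin n → ℕ, f = mono K a ∧
          ∃ p : ℕ, 0 < p ∧ mono K a ^ p ∈ I ^ (p * i)}) ↔
      ∀ k : ℕ, 1 ≤ k → ∀ a : Fin n → ℕ, (fun i => (a i : ℝ)) ∈ (k : ℝ) • BQ v →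
        DominatesColumnSum v k a := by
  rw [normal_iff_dominatesColumnSum_of_mul K v I hI]
  exact forall₂_congr fun k hk => forall_congr' fun a => by
    rw [exists_dominatesColumnSum_mul_iff v hk]

lemma hasIDP_BQ_of_dominatesColumnSum (h : ∀ k : ℕ, 1 ≤ k → ∀ a : Fin n → ℕ,
    (fun i => (a i : ℝ)) ∈ (k : ℝ) • BQ v → DominatesColumnSum v k a) : HasIDP (BQ v) := by
  intro k a ha
  rcases Nat.eq_zero_or_pos k with rfl | hk
  · have ha0 := Set.zero_smul_set_subset (BQ v) (by simpa using ha)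
    refine ⟨finZeroElim, finZeroElim, funext fun i => ?_⟩
    simpa using congrFun ha0 i
  have hnonneg := ((mem_smul_BQ_iff v (Nat.cast_pos.2 hk) _).1 ha).1
  lift a to Fin n → ℕ using fun i => by exact_mod_cast hnonneg i
  obtain ⟨g, hg⟩ := h k hk a (by simpa using ha)
  obtain ⟨f, hvf, hf⟩ := exists_le_sum_eq_of_sum_le ⟨0, hk⟩ hg
  refine ⟨fun t i => f t i, fun t => ?_, funext fun i => ?_⟩
  · exact mem_BQ_of_le v (column_mem_BQ v (g t)) fun i => by
      have := hvf t i
      simp only at this ⊢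
      exact_mod_cast this
  · simp [← hf, Finset.sum_apply]

lemma exists_eq_column_of_minimal (h : ∀ k : ℕ, 1 ≤ k → ∀ a : Fin n → ℕ,
    (fun i => (a i : ℝ)) ∈ (k : ℝ) • BQ v → DominatesColumnSum v k a) (a : Fin n → ℕ)
    (ha : (fun i => (a i : ℝ)) ∈ BQ v)
    (hmin : ∀ b : Fin n → ℕ, (fun i => (b i : ℝ)) ∈ BQ v → b ≤ a → b = a) : ∃ j, a = v j := by
  obtain ⟨g, hg⟩ := h 1 le_rfl a (by simpa using ha)
  rw [Fin.sum_univ_one] at hg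
  exact ⟨g 0, (hmin _ (column_mem_BQ v (g 0)) hg).symm⟩

lemma dominatesColumnSum_of_hasIDP (hIDP : HasIDP (BQ v))
    (hmin : ∀ a : Fin n → ℕ, (fun i => (a i : ℝ)) ∈ BQ v →
      (∀ b : Fin n → ℕ, (fun i => (b i : ℝ)) ∈ BQ v → b ≤ a → b = a) → ∃ j, a = v j)
    (k : ℕ) (a : Fin n → ℕ) (ha : (fun i => (a i : ℝ)) ∈ (k : ℝ) • BQ v) :
    DominatesColumnSum v k a := by
  obtain ⟨f, hfBQ, hf⟩ := hIDP k (fun i => a i) (by simpa using ha)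
  lift f to Fin k → Fin n → ℕ using fun t i => by simpa using (hfBQ t).1 i
  have hcol (t : Fin k) : ∃ j, v j ≤ f t := by
    obtain ⟨b, hbf, hb⟩ := exists_minimal_le_of_wellFoundedLT
      (fun b : Fin n → ℕ => (fun i => (b i : ℝ)) ∈ BQ v) (f t) (by simpa using hfBQ t)
    obtain ⟨j, rfl⟩ := hmin b hb.1 fun b' hb' hle => ((minimal_iff.1 hb).2 hb' hle).symm
    exact ⟨j, hbf⟩
  choose g hg using hcol
  refine ⟨g, fun i => ?_⟩
  have hfi : ∑ t, f t i = a i := by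
    have := congrFun hf i
    simp only [Finset.sum_apply] at this
    exact_mod_cast this.symm
  calc (∑ t, v (g t)) i = ∑ t, v (g t) i := Finset.sum_apply i _ _
    _ ≤ ∑ t, f t i := Finset.sum_le_sum fun t _ => hg t i
    _ = a i := hfi

end Normality

/-- The monomial ideal `I = (x^{v_1},…,x^{v_q})` is normal iff the
blocking polyhedron `B(Q)` has the integer decomposition property and every
minimal integer vector of `B(Q)` (w.r.t. the componentwise order) is a column
of `A`. -/
theorem monomial_ideal_normal_iff_idp_and_minimal_vectors_columns
    (K : Type*) [Field K] (n q : ℕ) (v : Fin q → Fin n → ℕ)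
    (I : Ideal (MvPolynomial (Fin n) K))
    (hI : I = Ideal.span {f | ∃ j, f = mono K (v j)}) :
    (∀ i : ℕ, 1 ≤ i →
        I ^ i = Ideal.span {f | ∃ a : Fin n → ℕ, f = mono K a ∧
          ∃ p : ℕ, 0 < p ∧ mono K a ^ p ∈ I ^ (p * i)})
    ↔ (HasIDP (BQ v) ∧
        ∀ a : Fin n → ℕ, (fun i => (a i : ℝ)) ∈ BQ v →
          (∀ b : Fin n → ℕ, (fun i => (b i : ℝ)) ∈ BQ v → b ≤ a → b = a) →
          ∃ j, a = v j) := by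
  rw [normal_iff_dominatesColumnSum_of_mem_smul_BQ v K I hI]
  exact ⟨fun h => ⟨hasIDP_BQ_of_dominatesColumnSum v h, exists_eq_column_of_minimal v h⟩,
    fun ⟨hIDP, hmin⟩ k _ => dominatesColumnSum_of_hasIDP v hIDP hmin k⟩
end

section
/- Let v_1,…,v_q ∈ ℕ^n, let A be the n×q matrix with columns v_1,…,v_q, let Q(A) = {x ∈ ℝ^n : x ≥ 0, xA ≥ 1}, and let B(Q) = {z ∈ ℝ^n : z ≥ 0, ⟨z,x⟩ ≥ 1 for all x ∈ Q(A)}. Then B(Q) = ℝ_+^n + conv(v_1,…,v_q), i.e., z ∈ B(Q) if and only if z = δ + c for some δ ∈ ℝ^n with δ ≥ 0 and some c in the convex hull of {v_1,…,v_q}. -/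
/-!
`ℝ₊ⁿ + conv V` is closed, convex and stable under adding nonnegative vectors. A point `z ≥ 0`
outside it is strictly separated from it by a hyperplane `⟨·, w⟩ = u`; the stability forces
`w ≥ 0`, hence `u > ⟨z, w⟩ ≥ 0`, and `x = w / u` is a point of `Q(A)` with `⟨z, x⟩ < 1`.
Conversely, every point of `conv V` satisfies `⟨·, x⟩ ≥ 1` for `x ∈ Q(A)`, because the
half-space is convex and contains `V`.
-/

open Pointwise

section Blocking

variable {ι : Type*}

theorem convex_Ici_add_convexHull (V : Set (ι → ℝ)) :
    Convex ℝ (Set.Ici 0 + convexHull ℝ V) :=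
  (convex_Ici 0).add (convex_convexHull ℝ V)

theorem Set.Finite.isClosed_Ici_add_convexHull {V : Set (ι → ℝ)} (hV : V.Finite) :
    IsClosed (Set.Ici 0 + convexHull ℝ V) :=
  isClosed_Ici.add_right_of_isCompact (hV.isCompact_convexHull ℝ)

theorem add_mem_Ici_add_convexHull {V : Set (ι → ℝ)} {s : ι → ℝ}
    (hs : s ∈ Set.Ici 0 + convexHull ℝ V) {d : ι → ℝ} (hd : 0 ≤ d) :
    s + d ∈ Set.Ici 0 + convexHull ℝ V := by
  obtain ⟨δ, hδ, c, hc, rfl⟩ := hs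
  exact ⟨δ + d, add_nonneg hδ hd, c, hc, add_right_comm δ d c⟩

theorem Ici_add_convexHull_subset_Ici {V : Set (ι → ℝ)} (hV : V ⊆ Set.Ici 0) :
    Set.Ici 0 + convexHull ℝ V ⊆ Set.Ici 0 := by
  rintro _ ⟨δ, hδ, c, hc, rfl⟩
  exact add_nonneg hδ (Set.mem_Ici.1 ((convex_Ici 0).convexHull_subset_iff.2 hV hc))

variable [Fintype ι]

theorem exists_dotProduct_lt_lt_of_notMem {S : Set (ι → ℝ)} (hconv : Convex ℝ S)
    (hclosed : IsClosed S) {z : ι → ℝ} (hz : z ∉ S) :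
    ∃ (w : ι → ℝ) (u : ℝ), z ⬝ᵥ w < u ∧ ∀ s ∈ S, u < s ⬝ᵥ w := by
  classical
  obtain ⟨f, u, hfz, hfS⟩ := geometric_hahn_banach_point_closed hconv hclosed hz
  set w := (dotProductEquiv ℝ ι).symm f.toLinearMap
  have hf : ∀ y, f y = y ⬝ᵥ w := fun y => by
    rw [dotProduct_comm]
    exact (LinearMap.congr_fun ((dotProductEquiv ℝ ι).apply_symm_apply f.toLinearMap) y).symm
  exact ⟨w, u, hf z ▸ hfz, fun s hs => hf s ▸ hfS s hs⟩

theorem nonneg_of_forall_lt_dotProduct {S : Set (ι → ℝ)} (hne : S.Nonempty)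
    (hup : ∀ s ∈ S, ∀ d, 0 ≤ d → s + d ∈ S) {w : ι → ℝ} {u : ℝ}
    (hw : ∀ s ∈ S, u < s ⬝ᵥ w) : 0 ≤ w := by
  classical
  intro i
  by_contra! hi
  obtain ⟨s, hs⟩ := hne
  -- `s + t • Pi.single i 1` lies in `S` but exactly on the level `u`
  set t := (s ⬝ᵥ w - u) / -w i
  have ht : t * -w i = s ⬝ᵥ w - u := div_mul_cancel₀ _ (neg_ne_zero.2 hi.ne)
  have ht0 : 0 ≤ t := div_nonneg (sub_nonneg.2 (hw s hs).le) (neg_nonneg.2 hi.le)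
  have hmove := hw (s + t • Pi.single i 1)
    (hup s hs _ (smul_nonneg ht0 (Pi.single_nonneg.2 zero_le_one)))
  rw [add_dotProduct, smul_dotProduct, single_dotProduct, one_mul, smul_eq_mul] at hmove
  linarith

theorem mem_of_forall_one_le_dotProduct {S : Set (ι → ℝ)} (hconv : Convex ℝ S)
    (hclosed : IsClosed S) (hne : S.Nonempty) (hup : ∀ s ∈ S, ∀ d, 0 ≤ d → s + d ∈ S)
    {z : ι → ℝ} (hz0 : 0 ≤ z) (hz : ∀ x, 0 ≤ x → (∀ s ∈ S, 1 ≤ s ⬝ᵥ x) → 1 ≤ z ⬝ᵥ x) :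
    z ∈ S := by
  by_contra hzS
  obtain ⟨w, u, hzu, hSu⟩ := exists_dotProduct_lt_lt_of_notMem hconv hclosed hzS
  have hw : 0 ≤ w := nonneg_of_forall_lt_dotProduct hne hup hSu
  have hu : 0 < u := (dotProduct_nonneg_of_nonneg hz0 hw).trans_lt hzu
  have hblock : ∀ s ∈ S, 1 ≤ s ⬝ᵥ u⁻¹ • w := fun s hs => by
    rw [dotProduct_smul, smul_eq_mul, le_inv_mul_iff₀ hu, mul_one]
    exact (hSu s hs).le
  have hzlt : z ⬝ᵥ u⁻¹ • w < 1 := by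
    rw [dotProduct_smul, smul_eq_mul, inv_mul_lt_iff₀ hu, mul_one]
    exact hzu
  exact hzlt.not_ge (hz _ (smul_nonneg (inv_nonneg.2 hu.le) hw) hblock)

theorem one_le_dotProduct_of_mem_Ici_add_convexHull {V : Set (ι → ℝ)} {x : ι → ℝ}
    (hx : 0 ≤ x) (hV : ∀ v ∈ V, 1 ≤ v ⬝ᵥ x) {z : ι → ℝ}
    (hz : z ∈ Set.Ici 0 + convexHull ℝ V) : 1 ≤ z ⬝ᵥ x := by
  obtain ⟨δ, hδ, c, hc, rfl⟩ := hz
  have hhalf : Convex ℝ {y : ι → ℝ | 1 ≤ y ⬝ᵥ x} :=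
    convex_halfSpace_ge ⟨fun a b => add_dotProduct a b x, fun r a => smul_dotProduct r a x⟩ 1
  have hδx : 0 ≤ δ ⬝ᵥ x := dotProduct_nonneg_of_nonneg hδ hx
  have hcx : 1 ≤ c ⬝ᵥ x := hhalf.convexHull_subset_iff.2 hV hc
  rw [add_dotProduct]
  linarith

theorem mem_Ici_add_convexHull_iff {V : Set (ι → ℝ)} (hfin : V.Finite) (hV : V ⊆ Set.Ici 0)
    {z : ι → ℝ} :
    z ∈ Set.Ici 0 + convexHull ℝ V ↔
      0 ≤ z ∧ ∀ x, 0 ≤ x → (∀ v ∈ V, 1 ≤ v ⬝ᵥ x) → 1 ≤ z ⬝ᵥ x := by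
  refine ⟨fun hz => ⟨Ici_add_convexHull_subset_Ici hV hz,
    fun x hx hVx => one_le_dotProduct_of_mem_Ici_add_convexHull hx hVx hz⟩, ?_⟩
  rintro ⟨hz0, hz⟩
  obtain rfl | ⟨v, hv⟩ := V.eq_empty_or_nonempty
  · exact absurd (hz 0 le_rfl (by simp)) (by norm_num)
  have hVS : V ⊆ Set.Ici 0 + convexHull ℝ V := fun w hw =>
    ⟨0, Set.self_mem_Ici, w, subset_convexHull ℝ V hw, zero_add w⟩
  exact mem_of_forall_one_le_dotProduct (convex_Ici_add_convexHull V)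
    hfin.isClosed_Ici_add_convexHull ⟨v, hVS hv⟩
    (fun s hs d hd => add_mem_Ici_add_convexHull hs hd) hz0
    fun x hx hS => hz x hx fun w hw => hS w (hVS hw)

end Blocking

/-- For `v₁,…,v_q ∈ ℕⁿ`, the blocking polyhedron
`B(Q) = {z ≥ 0 : ⟨z,x⟩ ≥ 1 for all x ∈ Q(A)}` of
`Q(A) = {x ≥ 0 : xA ≥ 1}` equals `ℝ₊ⁿ + conv(v₁,…,v_q)`. -/
theorem blocking_polyhedron_eq_pos_orthant_add_convexHull
    (n q : ℕ) (v : Fin q → Fin n → ℕ) (z : Fin n → ℝ) :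
    ((∀ i, 0 ≤ z i) ∧
      ∀ x : Fin n → ℝ,
        ((∀ i, 0 ≤ x i) ∧ ∀ j, 1 ≤ ∑ i, x i * (v j i : ℝ)) →
          1 ≤ ∑ i, z i * x i)
    ↔ ∃ δ c : Fin n → ℝ, (∀ i, 0 ≤ δ i) ∧
        c ∈ convexHull ℝ {x : Fin n → ℝ | ∃ j, x = fun i => (v j i : ℝ)} ∧
        z = δ + c := by
  set V : Set (Fin n → ℝ) := {x | ∃ j, x = fun i => (v j i : ℝ)}
  have hfin : V.Finite :=
    (Set.finite_range fun j i => (v j i : ℝ)).subset fun _ ⟨j, hj⟩ => ⟨j, hj.symm⟩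
  have hV : V ⊆ Set.Ici 0 := fun _ ⟨j, hj⟩ i => hj ▸ Nat.cast_nonneg (v j i)
  have hVx : ∀ x, (∀ w ∈ V, 1 ≤ w ⬝ᵥ x) ↔ ∀ j, 1 ≤ ∑ i, x i * (v j i : ℝ) := fun x => by
    simp [V, dotProduct, mul_comm]
  have hsum : z ∈ Set.Ici 0 + convexHull ℝ V ↔
      ∃ δ c, (∀ i, 0 ≤ δ i) ∧ c ∈ convexHull ℝ V ∧ z = δ + c :=
    ⟨fun ⟨δ, hδ, c, hc, h⟩ => ⟨δ, c, hδ, hc, h.symm⟩,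
      fun ⟨δ, c, hδ, hc, h⟩ => ⟨δ, hδ, c, hc, h.symm⟩⟩
  rw [← hsum, mem_Ici_add_convexHull_iff hfin hV]
  simp only [hVx, and_imp]
  rfl
end

section
/- Let G be a finite simple graph with vertex x_1, let G^1 be the graph obtained from G by duplicating x_1 (adding a new vertex y_1 adjacent exactly to the neighbors of x_1, and not adjacent to x_1), let cl(G) be the clutter of maximal cliques of G, and let cl(G)^1 be the clutter obtained from cl(G) by duplicating the vertex x_1 by y_1. Then cl(G)^1 = cl(G^1): a set is an edge of cl(G)^1 if and only if it is a maximal clique of G^1. -/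
/-!
The duplicated graph `G¹` is the pullback of `G` along the surjection `Option V → V` sending
the new vertex `y₁` to `x₁` and fixing the old ones. For a pullback along a surjection `f`,
the maximal cliques are exactly the sets on which `f` is injective and whose image is a maximal
clique of `G`. Over a clique `e` of `G` such sets are `e` itself and, when `x₁ ∈ e`, the set
`e` with `x₁` replaced by `y₁`: these are the edges of `cl(G)¹`.
-/

/-- `s` is a maximal clique of the graph `G`. -/
def IsMaxClique {V : Type*} (G : SimpleGraph V) (s : Set V) : Prop :=
  G.IsClique s ∧ ∀ t : Set V, G.IsClique t → s ⊆ t → s = t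

/-- The graph obtained from `G` by duplicating the vertex `x₁`: a new vertex
(`none`) is added whose neighbourhood is exactly the neighbourhood of `x₁`
(in particular it is not adjacent to `x₁`). The original vertices are the
`some` vertices. -/
def dupGraph {V : Type*} (G : SimpleGraph V) (x₁ : V) : SimpleGraph (Option V) :=
  SimpleGraph.fromRel fun a b => G.Adj (a.getD x₁) (b.getD x₁)

open Set Function

theorem isMaxClique_iff_maximal {V : Type*} {G : SimpleGraph V} {s : Set V} :
    IsMaxClique G s ↔ Maximal G.IsClique s :=
  ⟨fun h => ⟨h.1, fun _ ht hst => (h.2 _ ht hst).ge⟩,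
    fun h => ⟨h.1, fun _ ht hst => hst.antisymm (h.2 ht hst)⟩⟩

theorem dupGraph_eq_comap {V : Type*} (G : SimpleGraph V) (x : V) :
    dupGraph G x = G.comap (·.getD x) := by
  ext a b
  simp only [dupGraph, SimpleGraph.fromRel_adj, SimpleGraph.comap_adj]
  exact ⟨fun ⟨_, h⟩ => h.elim id G.adj_symm, fun h => ⟨fun hab => G.irrefl (hab ▸ h), .inl h⟩⟩

namespace SimpleGraph

variable {V W : Type*} {G : SimpleGraph V} {f : W → V} {s : Set W}

theorem isClique_comap_iff : (G.comap f).IsClique s ↔ InjOn f s ∧ G.IsClique (f '' s) := by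
  refine ⟨fun h => ⟨fun a ha b hb hab => ?_, Pairwise.image (r := G.Adj) h⟩,
    fun ⟨hinj, h⟩ => hinj.pairwise_image.1 h⟩
  by_contra hne
  exact G.ne_of_adj (h ha hb hne) hab

theorem maximal_isClique_comap_iff (hf : Surjective f) :
    Maximal (G.comap f).IsClique s ↔ InjOn f s ∧ Maximal G.IsClique (f '' s) := by
  constructor
  · rintro ⟨hs, hmax⟩
    obtain ⟨hinj, hclique⟩ := isClique_comap_iff.1 hs
    refine ⟨hinj, hclique, fun c hc hsc v hv => ?_⟩
    obtain ⟨w, rfl⟩ := hf v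
    by_contra hw
    have hws : (G.comap f).IsClique (insert w s) := hs.insert fun y hy _ =>
      hc hv (hsc (mem_image_of_mem f hy)) fun h => hw (h ▸ mem_image_of_mem f hy)
    exact hw (mem_image_of_mem f (hmax hws (subset_insert w s) (mem_insert w s)))
  · rintro ⟨hinj, hclique, hmax⟩
    refine ⟨isClique_comap_iff.2 ⟨hinj, hclique⟩, fun t ht hst w hw => ?_⟩
    obtain ⟨-, htc⟩ := isClique_comap_iff.1 ht
    obtain ⟨y, hy, hyw⟩ := hmax htc (image_mono hst) (mem_image_of_mem f hw)
    by_contra hne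
    exact G.ne_of_adj (ht (hst hy) hw fun h => hne (h ▸ hy)) hyw

end SimpleGraph

namespace Option

variable {V : Type*} {x : V}

theorem eq_image_some_or_eq_insert_none (s : Set (Option V)) :
    s = some '' (some ⁻¹' s) ∨ s = insert none (some '' (some ⁻¹' s)) := by
  by_cases h : none ∈ s
  · right; ext (_ | a) <;> simp [h]
  · left; ext (_ | a) <;> simp [h]

theorem image_some_ne_insert_none (A B : Set V) : some '' A ≠ insert none (some '' B) :=
  fun h => by simpa using (Set.ext_iff.1 h none).2 (mem_insert _ _)

theorem insert_none_image_some_inj {A B : Set V} :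
    insert none (some '' A) = insert none (some '' B) ↔ A = B := by
  refine ⟨fun h => ?_, fun h => h ▸ rfl⟩
  ext a
  simpa using congrArg (some a ∈ ·) h

theorem image_getD_image_some (A : Set V) : (·.getD x) '' (some '' A) = A := by
  simp [image_image]

theorem image_getD_insert_none (A : Set V) :
    (·.getD x) '' insert none (some '' A) = insert x A := by
  simp [image_insert_eq, image_image]

theorem injOn_getD_image_some (A : Set V) : InjOn (·.getD x) (some '' A) := by
  rintro _ ⟨a, -, rfl⟩ _ ⟨b, -, rfl⟩ h
  exact congrArg some h

theorem injOn_getD_insert_none_iff {A : Set V} :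
    InjOn (·.getD x) (insert none (some '' A)) ↔ x ∉ A := by
  rw [injOn_insert (by simp), image_getD_image_some]
  exact and_iff_right (injOn_getD_image_some A)

theorem injOn_getD_and_image_eq_iff {e : Set V} {s : Set (Option V)} :
    InjOn (·.getD x) s ∧ (·.getD x) '' s = e ↔
      s = some '' e ∨ x ∈ e ∧ s = insert none (some '' (e \ {x})) := by
  rcases eq_image_some_or_eq_insert_none s with h | h <;> rw [h] <;> generalize some ⁻¹' s = A
  · rw [image_getD_image_some, image_eq_image (some_injective V)]
    simp [injOn_getD_image_some, image_some_ne_insert_none]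
  · rw [injOn_getD_insert_none_iff, image_getD_insert_none, insert_none_image_some_inj,
      or_iff_right (image_some_ne_insert_none _ _).symm]
    constructor
    · rintro ⟨hx, rfl⟩
      exact ⟨mem_insert x A, (insert_sdiff_self_of_notMem hx).symm⟩
    · rintro ⟨hx, rfl⟩
      exact ⟨fun h => h.2 rfl, insert_sdiff_self_of_mem hx⟩

end Option

theorem cliqueClutter_duplication_eq_cliqueClutter_of_dupGraph_general
    {V : Type*} (G : SimpleGraph V) (x₁ : V)
    (s : Set (Option V)) :
    ((∃ e : Set V, IsMaxClique G e ∧ s = some '' e) ∨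
      (∃ e : Set V, IsMaxClique G e ∧ x₁ ∈ e ∧
        s = insert none (some '' (e \ {x₁}))))
    ↔ IsMaxClique (dupGraph G x₁) s := by
  rw [isMaxClique_iff_maximal, dupGraph_eq_comap,
    SimpleGraph.maximal_isClique_comap_iff fun v => ⟨some v, rfl⟩]
  simp only [isMaxClique_iff_maximal, ← exists_or, ← and_or_left,
    ← Option.injOn_getD_and_image_eq_iff]
  exact ⟨fun ⟨_, he, hinj, hs⟩ => ⟨hinj, hs ▸ he⟩, fun ⟨hinj, he⟩ => ⟨_, he, hinj, rfl⟩⟩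

/-- For a finite graph `G` with vertex `x₁`, the clutter obtained
from the clique clutter `cl(G)` by duplicating `x₁` equals the clique clutter
of the graph `G¹` obtained from `G` by duplicating `x₁`: a set of vertices is
an edge of `cl(G)¹` (i.e. is a maximal clique `e` of `G`, or is
`(e ∖ {x₁}) ∪ {y₁}` for a maximal clique `e` of `G` containing `x₁`) iff it
is a maximal clique of `G¹`. -/
theorem cliqueClutter_duplication_eq_cliqueClutter_of_dupGraph
    {V : Type*} [Fintype V] [DecidableEq V] (G : SimpleGraph V) (x₁ : V)
    (s : Set (Option V)) :
    ((∃ e : Set V, IsMaxClique G e ∧ s = some '' e) ∨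
      (∃ e : Set V, IsMaxClique G e ∧ x₁ ∈ e ∧
        s = insert none (some '' (e \ {x₁}))))
    ↔ IsMaxClique (dupGraph G x₁) s :=
  cliqueClutter_duplication_eq_cliqueClutter_of_dupGraph_general G x₁ s
end

section
/- Let P = (X, ≺) be a finite poset and let C be the clutter on X whose edges are the maximal chains of P. Then C satisfies the König property: the maximum number of pairwise disjoint maximal chains of P equals the minimum size of a set of vertices meeting every maximal chain of P. -/
/-!
A maximal chain of a finite poset is the vertex set of a walk along the cover relation `⋖` from
a minimal to a maximal element, and conversely. So the theorem is Menger's theorem for the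
digraph `⋖`, with sources the minimal and sinks the maximal elements: if every set meeting all
such walks has at least `k` elements, there are `k` pairwise disjoint such walks.

Menger's theorem is proved by induction on the number of edges, following Böhme, Göring and
Harant. Delete an edge `xy`. If the smaller digraph still needs `k` vertices to separate `A`
from `B`, induction applies. Otherwise it has a separator `S` with `|S| = k - 1`, and `S ∪ {x}`,
`S ∪ {y}` are separators of size `k` of the whole digraph. Initial segments of walks up to
`S ∪ {x}` avoid `xy`, so by induction there are `k` disjoint walks from `A` to `S ∪ {x}` without
the edge, and likewise `k` from `S ∪ {y}` to `B`. A vertex common to walks of the two families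
lies in `S`, which makes the glued walks disjoint.
-/

lemma Finset.notMem_and_card_insert_eq {α : Type*} [DecidableEq α] {s : Finset α} {a : α}
    {k : ℕ} (hk : k ≤ (insert a s).card) (hs : s.card < k) :
    a ∉ s ∧ (insert a s).card = k := by
  have ha : a ∉ s := fun ha => (hk.trans_lt (by rwa [Finset.insert_eq_of_mem ha])).false
  refine ⟨ha, ?_⟩
  rw [Finset.card_insert_of_notMem ha] at hk ⊢
  omega

lemma Equiv.swap_apply_mem_insert {α : Type*} [DecidableEq α] {x y s : α} {S : Finset α}
    (hxS : x ∉ S) (hyS : y ∉ S) (hs : s ∈ insert x S) : Equiv.swap x y s ∈ insert y S := by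
  rcases Finset.mem_insert.1 hs with rfl | hs
  · simp
  · rw [Equiv.swap_apply_of_ne_of_ne (ne_of_mem_of_not_mem hs hxS) (ne_of_mem_of_not_mem hs hyS)]
    exact Finset.mem_insert_of_mem hs

lemma Finset.card_le_card_of_pairwise_disjoint_of_forall_exists_mem {β : Type*}
    {F : Finset (Finset β)} {T : Finset β} (hF : (F : Set (Finset β)).Pairwise Disjoint)
    (hT : ∀ s ∈ F, ∃ v ∈ T, v ∈ s) : F.card ≤ T.card :=
  Finset.card_le_card_of_forall_subsingleton (fun s v => v ∈ s) hT
    fun _ _ _ ⟨hs, hvs⟩ _ ⟨ht, hvt⟩ =>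
      by_contra fun hne => Finset.disjoint_left.1 (hF hs ht hne) hvs hvt

section Walks

variable {V : Type*}

/-- Vertices may repeat: a walk contains a path with the same ends, so separating walks is the
same as separating paths. -/
structure IsWalkBetween (r : V → V → Prop) (A B : Set V) (p : List V) : Prop where
  isChain : p.IsChain r
  head?_mem : ∃ a ∈ A, p.head? = some a
  getLast?_mem : ∃ b ∈ B, p.getLast? = some b

def Separates (r : V → V → Prop) (A B : Set V) (T : Finset V) : Prop :=
  ∀ p, IsWalkBetween r A B p → ∃ v ∈ T, v ∈ p

def HasDisjointWalks (r : V → V → Prop) (A B : Set V) (k : ℕ) : Prop :=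
  ∃ f : Fin k → List V, (∀ i, IsWalkBetween r A B (f i)) ∧
    Pairwise fun i j => (f i).Disjoint (f j)

def MengerProperty (r : V → V → Prop) : Prop :=
  ∀ (A B : Set V) (k : ℕ), (∀ T, Separates r A B T → k ≤ T.card) → HasDisjointWalks r A B k

def eraseEdge (r : V → V → Prop) (e : V × V) (a b : V) : Prop := r a b ∧ (a, b) ≠ e

variable {r r' : V → V → Prop} {A B C D : Set V} {p q : List V}

namespace IsWalkBetween

lemma mono (hp : IsWalkBetween r A B p) (h : ∀ ⦃a b⦄, r a b → r' a b) :
    IsWalkBetween r' A B p :=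
  ⟨hp.isChain.imp h, hp.head?_mem, hp.getLast?_mem⟩

lemma reverse (hp : IsWalkBetween r A B p) : IsWalkBetween (flip r) B A p.reverse :=
  ⟨List.isChain_reverse.2 hp.isChain, by simpa using hp.getLast?_mem,
    by simpa using hp.head?_mem⟩

lemma cons {a b : V} (hab : r a b) (hq : IsWalkBetween r {b} B q) :
    IsWalkBetween r {a} B (a :: q) := by
  obtain ⟨q, rfl⟩ := List.head?_eq_some_iff.1 (by simpa using hq.head?_mem)
  refine ⟨List.isChain_cons_cons.2 ⟨hab, hq.isChain⟩, ⟨a, rfl, rfl⟩, ?_⟩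
  simpa [List.getLast?_cons_cons] using hq.getLast?_mem

lemma append {s : V} (hp : IsWalkBetween r A {s} p) (hq : IsWalkBetween r {s} B q) :
    IsWalkBetween r A B (p ++ q.tail) := by
  obtain ⟨p, rfl⟩ := List.getLast?_eq_some_iff.1 (by simpa using hp.getLast?_mem)
  obtain ⟨q, rfl⟩ := List.head?_eq_some_iff.1 (by simpa using hq.head?_mem)
  refine ⟨hp.isChain.append_overlap hq.isChain (List.cons_ne_nil _ _), ?_, ?_⟩
  · simpa [List.head?_append] using hp.head?_mem
  · obtain ⟨b, hb, hqb⟩ := hq.getLast?_mem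
    exact ⟨b, hb, by rw [List.append_assoc, List.singleton_append]; simpa using hqb⟩

lemma exists_prefix (hp : IsWalkBetween r A B p) {X : Finset V} (hX : ∃ v ∈ p, v ∈ X)
    (hr : ∀ ⦃a b⦄, r a b → a ∉ X → r' a b) :
    ∃ q, q <+: p ∧ IsWalkBetween r' A X q ∧ ∀ v ∈ q.dropLast, v ∉ X := by
  classical
  obtain ⟨v, hvp, hvX⟩ := hX
  obtain ⟨s, l₁, l₂, hl₁, hs, rfl, -⟩ :=
    List.exists_of_eraseP (p := fun v => decide (v ∈ X)) hvp (by simpa using hvX)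
  simp only [decide_eq_true_eq] at hl₁ hs
  refine ⟨l₁ ++ [s], ⟨l₂, by simp⟩, ⟨?_, ?_, s, hs, by simp⟩, by simpa using hl₁⟩
  · rw [List.isChain_iff_forall_rel_of_append_cons_cons]
    intro a b m₁ m₂ h
    have hc := hp.isChain.prefix (l₁ := l₁ ++ [s]) ⟨l₂, by simp⟩
    refine hr (List.isChain_iff_forall_rel_of_append_cons_cons.1 hc h) (hl₁ a ?_)
    have : a ∈ (l₁ ++ [s]).dropLast := by
      rw [h, List.dropLast_append_of_ne_nil (by simp), List.dropLast_cons_cons]; simp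
    simpa using this
  · obtain ⟨a, ha, hpa⟩ := hp.head?_mem
    refine ⟨a, ha, ?_⟩
    cases l₁ <;> simp_all

end IsWalkBetween

lemma separates_flip {T : Finset V} : Separates (flip r) B A T ↔ Separates r A B T :=
  ⟨fun h p hp => by simpa using h _ hp.reverse, fun h p hp => by simpa using h _ hp.reverse⟩

lemma Separates.of_prefix {X T : Finset V} (hX : Separates r A B X)
    (hr : ∀ ⦃a b⦄, r a b → a ∉ X → r' a b) (hT : Separates r' A X T) : Separates r A B T := by
  intro p hp
  obtain ⟨v, hvX, hvp⟩ := hX p hp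
  obtain ⟨q, hqp, hq, -⟩ := hp.exists_prefix ⟨v, hvp, hvX⟩ hr
  obtain ⟨w, hwT, hwq⟩ := hT q hq
  exact ⟨w, hwT, hqp.subset hwq⟩

lemma Separates.of_suffix {X T : Finset V} (hX : Separates r A B X)
    (hr : ∀ ⦃a b⦄, r a b → b ∉ X → r' a b) (hT : Separates r' X B T) : Separates r A B T :=
  separates_flip.1 <|
    (separates_flip.2 hX).of_prefix (fun _ _ hab ha => hr hab ha) (separates_flip.2 hT)

/-- The beginning of `p` up to `v` followed by the end of `q` from `v` is an `A`–`B` walk, which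
can meet `S` only in `v`. -/
lemma Separates.mem_of_mem_of_mem {S : Finset V} (hS : Separates r A B S)
    (hp : IsWalkBetween r A C p) (hpS : ∀ v ∈ p.dropLast, v ∉ S)
    (hq : IsWalkBetween r D B q) (hqS : ∀ v ∈ q.tail, v ∉ S) {v : V} (hvp : v ∈ p)
    (hvq : v ∈ q) : v ∈ S := by
  obtain ⟨l₁, l₂, rfl⟩ := List.append_of_mem hvp
  obtain ⟨m₁, m₂, rfl⟩ := List.append_of_mem hvq
  have hp' : IsWalkBetween r A {v} (l₁ ++ [v]) :=
    ⟨hp.isChain.prefix ⟨l₂, by simp⟩, by cases l₁ <;> simpa using hp.head?_mem, by simp⟩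
  have hq' : IsWalkBetween r {v} B (v :: m₂) :=
    ⟨hq.isChain.suffix ⟨m₁, rfl⟩, by simp, by simpa using hq.getLast?_mem⟩
  obtain ⟨w, hwS, hw⟩ := hS _ (hp'.append hq')
  simp only [List.tail_cons, List.append_assoc, List.singleton_append, List.mem_append,
    List.mem_cons] at hw
  rcases hw with hw | rfl | hw
  · exact absurd hwS (hpS w (by simp [List.dropLast_append_of_ne_nil, hw]))
  · exact hwS
  · exact absurd hwS (hqS w (by cases m₁ <;> simp [hw]))

lemma MengerProperty.flip (h : MengerProperty r) : MengerProperty (flip r) := by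
  intro A B k hk
  obtain ⟨f, hw, hd⟩ := h B A k fun T hT => hk T (separates_flip.2 hT)
  exact ⟨fun i => (f i).reverse, fun i => (hw i).reverse, fun i j hij => by simpa using hd hij⟩

/-- Cutting each of `|X|` disjoint `A`–`X` walks at its first vertex in `X` gives walks with
distinct ends, hence one ending at each vertex of `X`. -/
lemma MengerProperty.exists_linkage (hM : MengerProperty r) {X : Finset V}
    (hX : ∀ T, Separates r A X T → X.card ≤ T.card) :
    ∃ f : V → List V, (∀ x ∈ X, IsWalkBetween r A {x} (f x) ∧ ∀ v ∈ (f x).dropLast, v ∉ X) ∧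
      (X : Set V).Pairwise fun x y => (f x).Disjoint (f y) := by
  obtain ⟨g, hgw, hgd⟩ := hM A X X.card hX
  have hpre (i) : ∃ q, q <+: g i ∧ IsWalkBetween r A X q ∧ ∀ v ∈ q.dropLast, v ∉ X := by
    obtain ⟨b, hb, hgb⟩ := (hgw i).getLast?_mem
    exact (hgw i).exists_prefix ⟨b, List.mem_of_mem_getLast? hgb, hb⟩ fun _ _ h _ => h
  choose q hqg hqw hqX using hpre
  choose e heX he using fun i => (hqw i).getLast?_mem
  have he_inj : Function.Injective e := fun i j hij => by
    by_contra hne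
    exact hgd hne ((hqg i).subset (List.mem_of_mem_getLast? (he i)))
      ((hqg j).subset (hij ▸ List.mem_of_mem_getLast? (he j)))
  have hsurj (x) (hx : x ∈ X) : ∃ p, ∃ i, q i = p ∧ e i = x := by
    obtain ⟨i, -, rfl⟩ := Finset.surj_on_of_inj_on_of_card_le (s := Finset.univ)
      (fun i _ => e i) (fun i _ => heX i) (fun i j _ _ hij => he_inj hij) (by simp) x hx
    exact ⟨q i, i, rfl, rfl⟩
  choose! f hf using hsurj
  refine ⟨f, fun x hx => ?_, fun x hx y hy hxy => ?_⟩
  · obtain ⟨i, hi, rfl⟩ := hf x hx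
    rw [← hi]
    exact ⟨⟨(hqw i).isChain, (hqw i).head?_mem, e i, rfl, he i⟩, hqX i⟩
  · obtain ⟨i, hi, rfl⟩ := hf x hx
    obtain ⟨j, hj, rfl⟩ := hf y hy
    rw [← hi, ← hj]
    exact List.disjoint_of_subset_left (hqg i).subset
      (List.disjoint_of_subset_right (hqg j).subset (hgd fun h => hxy (h ▸ rfl)))

lemma MengerProperty.exists_linkage_reverse (hM : MengerProperty r) {X : Finset V}
    (hX : ∀ T, Separates r X B T → X.card ≤ T.card) :
    ∃ f : V → List V, (∀ x ∈ X, IsWalkBetween r {x} B (f x) ∧ ∀ v ∈ (f x).tail, v ∉ X) ∧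
      (X : Set V).Pairwise fun x y => (f x).Disjoint (f y) := by
  obtain ⟨f, hf, hfd⟩ := hM.flip.exists_linkage fun T hT => hX T (separates_flip.1 hT)
  refine ⟨fun x => (f x).reverse, fun x hx => ⟨(hf x hx).1.reverse, ?_⟩,
    fun x hx y hy hxy => by simpa using hfd hx hy hxy⟩
  simpa [List.tail_reverse] using (hf x hx).2

lemma hasDisjointWalks_of_finset {X : Finset V} {f : V → List V}
    (hf : ∀ x ∈ X, IsWalkBetween r A B (f x))
    (hd : (X : Set V).Pairwise fun x y => (f x).Disjoint (f y)) :
    HasDisjointWalks r A B X.card :=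
  ⟨fun i => f (X.equivFin.symm i), fun i => hf _ (X.equivFin.symm i).2, fun _ _ hij =>
    hd (X.equivFin.symm _).2 (X.equivFin.symm _).2
      (Subtype.val_injective.ne (X.equivFin.symm.injective.ne hij))⟩

lemma hasDisjointWalks_of_linkages {X : Finset V} {f g : V → List V}
    (hf : ∀ x ∈ X, IsWalkBetween r A {x} (f x)) (hg : ∀ x ∈ X, IsWalkBetween r {x} B (g x))
    (hff : (X : Set V).Pairwise fun x y => (f x).Disjoint (f y))
    (hgg : (X : Set V).Pairwise fun x y => (g x).tail.Disjoint (g y).tail)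
    (hfg : ∀ x ∈ X, ∀ y ∈ X, (f x).Disjoint (g y).tail) : HasDisjointWalks r A B X.card :=
  hasDisjointWalks_of_finset (fun x hx => (hf x hx).append (hg x hx)) fun x hx y hy hxy => by
    simp only [List.disjoint_append_left, List.disjoint_append_right]
    exact ⟨⟨hff hx hy hxy, (hfg y hy x hx).symm⟩, hfg x hx y hy, hgg hx hy hxy⟩

section eraseEdge

variable {x y : V}

lemma IsWalkBetween.eraseEdge_or_mem (hp : IsWalkBetween r A B p) :
    IsWalkBetween (eraseEdge r (x, y)) A B p ∨ x ∈ p ∧ y ∈ p := by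
  by_cases h : p.IsChain (eraseEdge r (x, y))
  · exact Or.inl ⟨h, hp.head?_mem, hp.getLast?_mem⟩
  · right
    simp only [List.isChain_iff_forall_rel_of_append_cons_cons, not_forall] at h
    obtain ⟨a, b, l₁, l₂, rfl, hab⟩ := h
    obtain ⟨rfl, rfl⟩ : a = x ∧ b = y := by
      have hab' := List.isChain_iff_forall_rel_of_append_cons_cons.1 hp.isChain rfl
      simpa [eraseEdge, hab'] using hab
    simp

lemma Separates.insert_of_eraseEdge {S : Finset V} [DecidableEq V]
    (hS : Separates (eraseEdge r (x, y)) A B S) {z : V} (hz : z = x ∨ z = y) :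
    Separates r A B (insert z S) := by
  intro p hp
  rcases hp.eraseEdge_or_mem with hp | ⟨hx, hy⟩
  · obtain ⟨v, hv, hvp⟩ := hS p hp
    exact ⟨v, Finset.mem_insert_of_mem hv, hvp⟩
  · exact ⟨z, Finset.mem_insert_self _ _, by rcases hz with rfl | rfl <;> assumption⟩

/-- The walks ending in `S ∪ {x}` are glued to those starting in `S ∪ {y}` along `swap x y`,
the walk ending at `x` continuing through the edge `xy`. -/
lemma hasDisjointWalks_of_linkages_eraseEdge [DecidableEq V] (hxy : r x y) {S : Finset V}
    (hS : Separates (eraseEdge r (x, y)) A B S) (hxS : x ∉ S) (hyS : y ∉ S) {f g : V → List V}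
    (hf : ∀ s ∈ insert x S,
      IsWalkBetween (eraseEdge r (x, y)) A {s} (f s) ∧ ∀ v ∈ (f s).dropLast, v ∉ insert x S)
    (hfd : (↑(insert x S) : Set V).Pairwise fun s t => (f s).Disjoint (f t))
    (hg : ∀ s ∈ insert y S,
      IsWalkBetween (eraseEdge r (x, y)) {s} B (g s) ∧ ∀ v ∈ (g s).tail, v ∉ insert y S)
    (hgd : (↑(insert y S) : Set V).Pairwise fun s t => (g s).Disjoint (g t)) :
    HasDisjointWalks r A B (insert x S).card := by
  set σ := Equiv.swap x y
  have hσ (s) (hs : s ∈ insert x S) : σ s ∈ insert y S := Equiv.swap_apply_mem_insert hxS hyS hs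
  set g' : V → List V := fun s => if s = x then x :: g y else g s
  have hg' : ∀ s ∈ insert x S, (g' s).tail ⊆ g (σ s) ∧ ∀ v ∈ (g' s).tail, v ∉ S := by
    intro s hs
    rcases Finset.mem_insert.1 hs with rfl | hs
    · obtain ⟨hgy, hgyS⟩ := hg y (Finset.mem_insert_self y S)
      simp only [g', σ, if_pos, List.tail_cons, Equiv.swap_apply_left]
      refine ⟨List.Subset.refl _, fun v hv hvS => ?_⟩
      rw [List.eq_cons_of_mem_head? (l := g y) (by simpa using hgy.head?_mem), List.mem_cons] at hv
      exact hv.elim (fun h => hyS (h ▸ hvS)) fun hv => hgyS v hv (Finset.mem_insert_of_mem hvS)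
    · have hsx := ne_of_mem_of_not_mem hs hxS
      simp only [g', σ, if_neg hsx,
        Equiv.swap_apply_of_ne_of_ne hsx (ne_of_mem_of_not_mem hs hyS)]
      exact ⟨List.tail_subset _, fun v hv hvS =>
        (hg s (Finset.mem_insert_of_mem hs)).2 v hv (Finset.mem_insert_of_mem hvS)⟩
  refine hasDisjointWalks_of_linkages (f := f) (g := g') (fun s hs => (hf s hs).1.mono
    fun _ _ h => h.1) (fun s hs => ?_) hfd (fun s hs t ht hst => ?_) (fun s hs t ht => ?_)
  · rcases Finset.mem_insert.1 hs with rfl | hs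
    · simpa [g'] using ((hg _ (Finset.mem_insert_self _ _)).1.mono fun _ _ h => h.1).cons hxy
    · simpa [g', ne_of_mem_of_not_mem hs hxS] using
        (hg s (Finset.mem_insert_of_mem hs)).1.mono fun _ _ h => h.1
  · exact List.disjoint_of_subset_left (hg' s hs).1 (List.disjoint_of_subset_right (hg' t ht).1
      (hgd (hσ s hs) (hσ t ht) (σ.injective.ne hst)))
  · intro v hvf hvg
    refine (hg' t ht).2 v hvg (hS.mem_of_mem_of_mem (hf s hs).1 (fun w hw hwS => ?_)
      (hg _ (hσ t ht)).1 (fun w hw hwS => ?_) hvf ((hg' t ht).1 hvg))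
    · exact (hf s hs).2 w hw (Finset.mem_insert_of_mem hwS)
    · exact (hg _ (hσ t ht)).2 w hw (Finset.mem_insert_of_mem hwS)

lemma hasDisjointWalks_of_separates_eraseEdge [DecidableEq V] (hxy : r x y)
    (hM : MengerProperty (eraseEdge r (x, y))) {k : ℕ}
    (hk : ∀ T, Separates r A B T → k ≤ T.card) {S : Finset V}
    (hS : Separates (eraseEdge r (x, y)) A B S) (hSk : S.card < k) :
    HasDisjointWalks r A B k := by
  have hSx := hS.insert_of_eraseEdge (Or.inl rfl)
  have hSy := hS.insert_of_eraseEdge (Or.inr rfl)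
  obtain ⟨hxS, hcardx⟩ := Finset.notMem_and_card_insert_eq (hk _ hSx) hSk
  obtain ⟨hyS, hcardy⟩ := Finset.notMem_and_card_insert_eq (hk _ hSy) hSk
  obtain ⟨f, hf, hfd⟩ := hM.exists_linkage (X := insert x S) fun T hT =>
    hcardx ▸ hk T (hSx.of_prefix
      (fun a b hab ha => ⟨hab, fun h => ha (by simp [(Prod.mk.inj h).1])⟩) hT)
  obtain ⟨g, hg, hgd⟩ := hM.exists_linkage_reverse (X := insert y S) fun T hT =>
    hcardy ▸ hk T (hSy.of_suffix
      (fun a b hab hb => ⟨hab, fun h => hb (by simp [(Prod.mk.inj h).2])⟩) hT)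
  exact hcardx ▸ hasDisjointWalks_of_linkages_eraseEdge hxy hS hxS hyS hf hfd hg hgd

end eraseEdge

lemma MengerProperty.of_eraseEdge {x y : V} (hxy : r x y)
    (hM : MengerProperty (eraseEdge r (x, y))) : MengerProperty r := by
  classical
  intro A B k hk
  by_cases h : ∀ T, Separates (eraseEdge r (x, y)) A B T → k ≤ T.card
  · obtain ⟨f, hf, hfd⟩ := hM A B k h
    exact ⟨f, fun i => (hf i).mono fun _ _ h => h.1, hfd⟩
  · push Not at h
    obtain ⟨S, hS, hSk⟩ := h
    exact hasDisjointWalks_of_separates_eraseEdge hxy hM hk hS hSk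

lemma mengerProperty_of_forall_not [Finite V] (hr : ∀ a b, ¬r a b) : MengerProperty r := by
  intro A B k hk
  have hsep : Separates r A B (A ∩ B).toFinite.toFinset := by
    intro p hp
    obtain ⟨a, ha, hpa⟩ := hp.head?_mem
    obtain ⟨t, rfl⟩ := List.head?_eq_some_iff.1 hpa
    cases t with
    | nil => exact ⟨a, by simpa using ⟨ha, by simpa using hp.getLast?_mem⟩, by simp⟩
    | cons c t => exact absurd (List.isChain_cons_cons.1 hp.isChain).1 (hr a c)
  obtain ⟨Y, hY, rfl⟩ := Finset.exists_subset_card_eq (hk _ hsep)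
  refine hasDisjointWalks_of_finset (f := fun a => [a]) (fun a ha => ?_)
    fun a _ b _ hab => by simpa using hab.symm
  obtain ⟨haA, haB⟩ : a ∈ A ∧ a ∈ B := by simpa using hY ha
  exact ⟨List.isChain_singleton a, ⟨a, haA, rfl⟩, ⟨a, haB, rfl⟩⟩

theorem mengerProperty [Finite V] (r : V → V → Prop) : MengerProperty r := by
  induction hn : {e : V × V | r e.1 e.2}.ncard using Nat.strong_induction_on generalizing r with
  | _ n ih =>
  by_cases hr : ∃ x y, r x y
  · obtain ⟨x, y, hxy⟩ := hr
    refine .of_eraseEdge hxy (ih _ ?_ _ rfl)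
    have : {e : V × V | eraseEdge r (x, y) e.1 e.2} = {e | r e.1 e.2} \ {(x, y)} := by
      ext; simp [eraseEdge]
    rw [this, ← hn]
    exact Set.ncard_sdiff_singleton_lt_of_mem hxy
  · push Not at hr
    exact mengerProperty_of_forall_not hr

end Walks

section MaximalChains

variable {α : Type*} [PartialOrder α] {s : Set α}

lemma IsChain.lt_trichotomy (hs : IsChain (· < ·) s) {x y : α} (hx : x ∈ s) (hy : y ∈ s) :
    x < y ∨ x = y ∨ y < x := by
  rcases eq_or_ne x y with h | h
  · exact Or.inr (Or.inl h)
  · exact (hs hx hy h).imp_right Or.inr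

lemma IsMaxChain.mem_of_forall_ne (hs : IsMaxChain (· < ·) s) {c : α}
    (hc : ∀ x ∈ s, x ≠ c → x < c ∨ c < x) : c ∈ s := by
  rw [hs.2 (hs.1.insert fun b hb hcb => (hc b hb hcb.symm).symm) (Set.subset_insert c s)]
  exact Set.mem_insert c s

lemma IsMaxChain.exists_isMin [Finite α] (hs : IsMaxChain (· < ·) s) (hne : s.Nonempty) :
    ∃ a ∈ s, IsMin a := by
  obtain ⟨a, has, hmin⟩ := s.toFinite.exists_minimal hne
  refine ⟨a, has, fun c hca => hmin (hs.mem_of_forall_ne fun x hx hxc => Or.inr ?_) hca⟩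
  rcases hs.1.lt_trichotomy hx has with h | rfl | h
  · exact absurd (hmin hx h.le) h.not_ge
  · exact hca.lt_of_ne hxc.symm
  · exact hca.trans_lt h

lemma IsMaxChain.exists_covBy [Finite α] (hs : IsMaxChain (· < ·) s) {a : α} (ha : a ∈ s)
    (hmax : ¬IsMax a) : ∃ b ∈ s, a ⋖ b := by
  have hU : {x | x ∈ s ∧ a < x}.Nonempty := by
    obtain ⟨c, hac⟩ := not_isMax_iff.1 hmax
    by_contra hU
    refine hU ⟨c, hs.mem_of_forall_ne fun x hx _ => Or.inl ?_, hac⟩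
    rcases hs.1.lt_trichotomy hx ha with h | rfl | h
    · exact h.trans hac
    · exact hac
    · exact absurd ⟨x, hx, h⟩ hU
  obtain ⟨b, ⟨hbs, hab⟩, hbmin⟩ := (Set.toFinite _).exists_minimal hU
  refine ⟨b, hbs, hab, fun c hac hcb => (hbmin ⟨?_, hac⟩ hcb.le).not_gt hcb⟩
  refine hs.mem_of_forall_ne fun x hx _ => ?_
  rcases hs.1.lt_trichotomy hx ha with h | rfl | h
  · exact Or.inl (h.trans hac)
  · exact Or.inl hac
  · rcases hs.1.lt_trichotomy hx hbs with h' | rfl | h'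
    · exact absurd (hbmin ⟨hx, h⟩ h'.le) h'.not_ge
    · exact Or.inr hcb
    · exact Or.inr (hcb.trans h')

lemma IsMaxChain.exists_isWalkBetween_of_mem [Finite α] (hs : IsMaxChain (· < ·) s) {a : α}
    (ha : a ∈ s) : ∃ p, IsWalkBetween (· ⋖ ·) {a} {b | IsMax b} p ∧ ∀ x ∈ p, x ∈ s := by
  induction a using WellFoundedGT.induction with
  | _ a ih =>
  by_cases hmax : IsMax a
  · exact ⟨[a], ⟨List.isChain_singleton a, ⟨a, rfl, rfl⟩, ⟨a, hmax, rfl⟩⟩, by simpa⟩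
  · obtain ⟨b, hb, hab⟩ := hs.exists_covBy ha hmax
    obtain ⟨p, hp, hps⟩ := ih b hab.lt hb
    exact ⟨a :: p, hp.cons hab, by simpa [ha] using hps⟩

lemma IsMaxChain.exists_isWalkBetween [Finite α] [Nonempty α] (hs : IsMaxChain (· < ·) s) :
    ∃ p, IsWalkBetween (· ⋖ ·) {a | IsMin a} {b | IsMax b} p ∧ ∀ x ∈ p, x ∈ s := by
  obtain ⟨a, has, hmin⟩ := hs.exists_isMin (hs.nonempty_iff.1 ‹_›)
  obtain ⟨p, hp, hps⟩ := hs.exists_isWalkBetween_of_mem has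
  exact ⟨p, ⟨hp.isChain, ⟨a, hmin, by simpa using hp.head?_mem⟩, hp.getLast?_mem⟩, hps⟩

/-- An element comparable with every vertex lies above the minimal head, hence, consecutive
vertices being covers, above every vertex, the maximal last one included. -/
lemma IsWalkBetween.isMaxChain {p : List α}
    (hp : IsWalkBetween (· ⋖ ·) {a | IsMin a} {b | IsMax b} p) :
    IsMaxChain (· < ·) {x | x ∈ p} := by
  have hlt : p.Pairwise (· < ·) := (hp.isChain.imp fun _ _ h => h.lt).pairwise
  have : Std.Symm fun x y : α => x < y ∨ y < x := ⟨fun _ _ => Or.symm⟩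
  refine ⟨fun x hx y hy hxy => (hlt.imp (S := fun x y => x < y ∨ y < x) Or.inl).forall hx hy hxy,
    fun t ht hpt => hpt.antisymm fun c hc => ?_⟩
  by_contra hcp
  have hcomp (x) (hx : x ∈ p) : x < c ∨ c < x := ht (hpt hx) hc (ne_of_mem_of_not_mem hx hcp)
  obtain ⟨a, ha, hpa⟩ := hp.head?_mem
  obtain ⟨q, rfl⟩ := List.head?_eq_some_iff.1 hpa
  have hac : a < c := (hcomp a (by simp)).resolve_right fun h => (ha h.le).not_gt h
  have hq : ∀ x ∈ q, x < c := (List.IsChain.iff_mem.1 hp.isChain).cons_induction _ _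
    (fun x y ⟨_, hy, hxy⟩ hxc => (hcomp y hy).resolve_right fun hcy => hxy.2 hxc hcy) hac
  obtain ⟨b, hb, hpb⟩ := hp.getLast?_mem
  have hbc : b < c := by
    rcases List.mem_cons.1 (List.mem_of_mem_getLast? hpb) with rfl | h
    exacts [hac, hq b h]
  exact (hb hbc.le).not_gt hbc

lemma Separates.exists_mem_of_isMaxChain [Finite α] [Nonempty α] {T : Finset α}
    (hT : Separates (· ⋖ ·) {a | IsMin a} {b | IsMax b} T) (hs : IsMaxChain (· < ·) s) :
    ∃ v ∈ T, v ∈ s := by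
  obtain ⟨p, hp, hps⟩ := hs.exists_isWalkBetween
  obtain ⟨v, hvT, hvp⟩ := hT p hp
  exact ⟨v, hvT, hps v hvp⟩

lemma HasDisjointWalks.exists_finset_isMaxChain {k : ℕ}
    (h : HasDisjointWalks (· ⋖ ·) {a : α | IsMin a} {b | IsMax b} k) :
    ∃ F : Finset (Finset α), F.card = k ∧ (∀ s ∈ F, IsMaxChain (· < ·) (s : Set α)) ∧
      (F : Set (Finset α)).Pairwise Disjoint := by
  classical
  obtain ⟨f, hf, hfd⟩ := h
  have hinj : Function.Injective fun i => (f i).toFinset := by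
    intro i j hij
    by_contra hne
    obtain ⟨a, -, ha⟩ := (hf i).head?_mem
    have hai := List.mem_of_mem_head? ha
    exact hfd hne hai (by simpa [hij] using List.mem_toFinset.2 hai)
  refine ⟨Finset.univ.image fun i => (f i).toFinset,
    by simp [Finset.card_image_of_injective _ hinj], ?_, ?_⟩
  · simp only [Finset.mem_image, Finset.mem_univ, true_and, forall_exists_index,
      forall_apply_eq_imp_iff, List.coe_toFinset]
    exact fun i => (hf i).isMaxChain
  · simp only [Finset.coe_image, Finset.coe_univ, Set.image_univ]
    rintro _ ⟨i, rfl⟩ _ ⟨j, rfl⟩ hne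
    exact Finset.disjoint_left.2 fun v hvi hvj => hfd (fun h => hne (by rw [h]))
      (List.mem_toFinset.1 hvi) (List.mem_toFinset.1 hvj)

end MaximalChains

theorem maximalChains_clutter_koenig_general
    {V : Type*} [Fintype V] [PartialOrder V] [Nonempty V] :
    ∃ m : ℕ,
      IsGreatest {k : ℕ | ∃ F : Finset (Finset V), F.card = k ∧
        (∀ s ∈ F, IsMaxChain (· < ·) (↑s : Set V)) ∧
        (↑F : Set (Finset V)).Pairwise fun a b => Disjoint a b} m ∧
      IsLeast {k : ℕ | ∃ T : Finset V, T.card = k ∧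
        ∀ s : Finset V, IsMaxChain (· < ·) (↑s : Set V) → ∃ v ∈ T, v ∈ s} m := by
  obtain ⟨m, hm⟩ : ∃ m, IsLeast {k : ℕ | ∃ T : Finset V, T.card = k ∧
      ∀ s : Finset V, IsMaxChain (· < ·) (↑s : Set V) → ∃ v ∈ T, v ∈ s} m := by
    refine ⟨_, isLeast_csInf ⟨_, Finset.univ, rfl, fun s hs => ?_⟩⟩
    obtain ⟨v, hv⟩ := hs.nonempty_iff.1 ‹_›
    exact ⟨v, Finset.mem_univ v, hv⟩
  refine ⟨m, ⟨?_, ?_⟩, hm⟩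
  · exact (mengerProperty _ _ _ m fun T hT =>
      hm.2 ⟨T, rfl, fun s hs => hT.exists_mem_of_isMaxChain hs⟩).exists_finset_isMaxChain
  · rintro k ⟨F, rfl, hF, hFd⟩
    obtain ⟨T, rfl, hT⟩ := hm.1
    exact Finset.card_le_card_of_pairwise_disjoint_of_forall_exists_mem hFd
      fun s hs => hT s (hF s hs)

/-- the clutter of maximal chains of a finite poset has the
König property: the maximum number of pairwise disjoint maximal chains equals
the minimum size of a set of vertices meeting every maximal chain. -/
theorem maximalChains_clutter_koenig
    {V : Type*} [Fintype V] [DecidableEq V] [PartialOrder V] [Nonempty V] :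
    ∃ m : ℕ,
      IsGreatest {k : ℕ | ∃ F : Finset (Finset V), F.card = k ∧
        (∀ s ∈ F, IsMaxChain (· < ·) (↑s : Set V)) ∧
        (↑F : Set (Finset V)).Pairwise fun a b => Disjoint a b} m ∧
      IsLeast {k : ℕ | ∃ T : Finset V, T.card = k ∧
        ∀ s : Finset V, IsMaxChain (· < ·) (↑s : Set V) → ∃ v ∈ T, v ∈ s} m :=
  maximalChains_clutter_koenig_general
end
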